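/- arXiv:2104.00368 — 2 statements merged into one kernel-verified Lean document; each statement's English description precedes it below -/
import Mathlib

section
/- Let M be a topological space metrized by two distances ρ and ρ' inducing the same topology. Suppose there is a group of homeomorphisms of M acting transitively and by isometries for both ρ and ρ'. Suppose further there is a point o ∈ M, a bijection δ : M → M fixing o, and a constant λ ∈ (0,1) such that ρ(δ(x),δ(y)) = λ·ρ(x,y) and ρ'(δ(x),δ(y)) = λ·ρ'(x,y) for all x,y ∈ M. Then ρ and ρ' are biLipschitz equivalent via the identity map, i.e. there is C ≥ 1 with (1/C)·ρ(x,y) ≤ ρ'(x,y) ≤ C·ρ(x,y) for all x,y ∈ M. -/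
lemma aux_two_metric_bound {M : Type*} (ρ ρ' : M → M → ℝ)
    (hρ_self : ∀ x y, ρ x y = 0 ↔ x = y)
    (hρ_symm : ∀ x y, ρ x y = ρ y x)
    (hρ_tri : ∀ x y z, ρ x z ≤ ρ x y + ρ y z)
    (hρ'_refl : ∀ x, ρ' x x = 0)
    (o : M) (δ : M → M) (hδ_bij : Function.Bijective δ) (hδ_o : δ o = o)
    (lam : ℝ) (hlam0 : 0 < lam) (hlam1 : lam < 1)
    (hδ_ρ : ∀ x y, ρ (δ x) (δ y) = lam * ρ x y)
    (hδ_ρ' : ∀ x y, ρ' (δ x) (δ y) = lam * ρ' x y)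
    (G : Set (M → M))
    (hG_trans : ∀ x y : M, ∃ g ∈ G, g x = y)
    (hG_iso : ∀ g ∈ G, ∀ x y, ρ (g x) (g y) = ρ x y)
    (hG_iso' : ∀ g ∈ G, ∀ x y, ρ' (g x) (g y) = ρ' x y)
    (d₀ : ℝ) (hd₀ : 0 < d₀)
    (hball : ∀ y, ρ o y < d₀ → ρ' o y < 1) :
    ∃ C : ℝ, 0 < C ∧ ∀ x y, ρ' x y ≤ C * ρ x y := by
  have hl : lam ≠ 0 := ne_of_gt hlam0
  set e : M ≃ M := Equiv.ofBijective δ hδ_bij with he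
  have he_app : ∀ z, δ (e.symm z) = z := fun z => e.apply_symm_apply z
  -- forward iterates
  have hfwd : ∀ n : ℕ, ∀ z, ρ o (δ^[n] z) = lam ^ n * ρ o z ∧
      ρ' o (δ^[n] z) = lam ^ n * ρ' o z := by
    intro n
    induction n with
    | zero => intro z; simp
    | succ n ih =>
      intro z
      rw [Function.iterate_succ_apply']
      have h1 := hδ_ρ o (δ^[n] z)
      have h2 := hδ_ρ' o (δ^[n] z)
      rw [hδ_o] at h1 h2
      rw [h1, h2, (ih z).1, (ih z).2]
      constructor <;> ring
  -- backward iterates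
  have hinv : ∀ w, ρ o (e.symm w) = lam⁻¹ * ρ o w := by
    intro w
    have h1 := hδ_ρ o (e.symm w)
    rw [hδ_o, he_app] at h1
    rw [h1]
    field_simp
  have hinv' : ∀ w, ρ' o (e.symm w) = lam⁻¹ * ρ' o w := by
    intro w
    have h1 := hδ_ρ' o (e.symm w)
    rw [hδ_o, he_app] at h1
    rw [h1]
    field_simp
  have hbwd : ∀ n : ℕ, ∀ z, ρ o ((e.symm)^[n] z) = (lam⁻¹) ^ n * ρ o z ∧
      ρ' o ((e.symm)^[n] z) = (lam⁻¹) ^ n * ρ' o z := by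
    intro n
    induction n with
    | zero => intro z; simp
    | succ n ih =>
      intro z
      rw [Function.iterate_succ_apply', hinv, hinv', (ih z).1, (ih z).2, pow_succ]
      constructor <;> ring
  have hzpow : ∀ m : ℤ, ∀ z, ∃ z', ρ o z' = lam ^ m * ρ o z ∧
      ρ' o z' = lam ^ m * ρ' o z := by
    intro m z
    rcases m with n | n
    · exact ⟨δ^[n] z, by simpa using (hfwd n z).1, by simpa using (hfwd n z).2⟩
    · refine ⟨(e.symm)^[n+1] z, ?_, ?_⟩
      · rw [(hbwd (n+1) z).1, zpow_negSucc, inv_pow]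
      · rw [(hbwd (n+1) z).2, zpow_negSucc, inv_pow]
  refine ⟨1 / (lam * d₀), by positivity, ?_⟩
  intro x y
  by_cases hxy : x = y
  · subst hxy
    rw [hρ'_refl, (hρ_self x x).mpr rfl, mul_zero]
  · have hrne : ρ x y ≠ 0 := fun h => hxy ((hρ_self x y).mp h)
    have hrnn : 0 ≤ ρ x y := by
      have h1 := hρ_tri x y x
      have h2 := (hρ_self x x).mpr rfl
      have h3 := hρ_symm y x
      linarith
    have hr : 0 < ρ x y := lt_of_le_of_ne hrnn (Ne.symm hrne)
    obtain ⟨g, hgG, hgx⟩ := hG_trans x o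
    have hz1 : ρ o (g y) = ρ x y := by rw [← hgx]; exact hG_iso g hgG x y
    have hz2 : ρ' o (g y) = ρ' x y := by rw [← hgx]; exact hG_iso' g hgG x y
    have hu : 1 < lam⁻¹ := by
      have h := mul_inv_cancel₀ hl
      nlinarith [inv_pos.mpr hlam0]
    obtain ⟨n, hn1, hn2⟩ := exists_mem_Ico_zpow (x := ρ x y / d₀) (by positivity) hu
    rw [inv_zpow] at hn1
    rw [inv_zpow] at hn2
    have hpn : (0:ℝ) < lam ^ n := zpow_pos hlam0 n
    have hpm : (0:ℝ) < lam ^ (n+1) := zpow_pos hlam0 (n+1)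
    have hpm_eq : lam ^ (n+1) = lam * lam ^ n := by
      rw [zpow_add_one₀ hl]; ring
    -- lam^(n+1) * ρ x y < d₀
    have hup : lam ^ (n+1) * ρ x y < d₀ := by
      have h2 : ρ x y < (lam ^ (n+1))⁻¹ * d₀ := by
        rw [div_lt_iff₀ hd₀] at hn2; linarith
      have := mul_lt_mul_of_pos_left h2 hpm
      rwa [← mul_assoc, mul_inv_cancel₀ (ne_of_gt hpm), one_mul] at this
    -- lam * d₀ ≤ lam^(n+1) * ρ x y
    have hlo : lam * d₀ ≤ lam ^ (n+1) * ρ x y := by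
      have h1 : d₀ ≤ lam ^ n * ρ x y := by
        rw [le_div_iff₀ hd₀] at hn1
        have := mul_le_mul_of_nonneg_left hn1 (le_of_lt hpn)
        rwa [← mul_assoc, mul_inv_cancel₀ (ne_of_gt hpn), one_mul] at this
      calc lam * d₀ ≤ lam * (lam ^ n * ρ x y) :=
            mul_le_mul_of_nonneg_left h1 (le_of_lt hlam0)
        _ = lam ^ (n+1) * ρ x y := by rw [hpm_eq]; ring
    obtain ⟨z', hz'1, hz'2⟩ := hzpow (n+1) (g y)
    rw [hz1] at hz'1
    rw [hz2] at hz'2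
    have hb : ρ' o z' < 1 := hball z' (by rw [hz'1]; exact hup)
    rw [hz'2] at hb
    -- conclude
    rw [div_mul_eq_mul_div, one_mul, le_div_iff₀ (by positivity)]
    nlinarith [mul_lt_mul_of_pos_left hb (mul_pos hlam0 hd₀)]

/-- Two distances on a set with the same topology, a transitive group of
common isometries, and a common dilation of factor λ ∈ (0,1) fixing a point, are
biLipschitz equivalent via the identity map. -/
theorem two_homogeneous_distances_biLipschitz
    {M : Type*} (ρ ρ' : M → M → ℝ)
    -- ρ is a metric
    (hρ_self : ∀ x y, ρ x y = 0 ↔ x = y)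
    (hρ_symm : ∀ x y, ρ x y = ρ y x)
    (hρ_tri : ∀ x y z, ρ x z ≤ ρ x y + ρ y z)
    -- ρ' is a metric
    (hρ'_self : ∀ x y, ρ' x y = 0 ↔ x = y)
    (hρ'_symm : ∀ x y, ρ' x y = ρ' y x)
    (hρ'_tri : ∀ x y z, ρ' x z ≤ ρ' x y + ρ' y z)
    -- the two metrics induce the same topology (mutual ball inclusion at every point)
    (h_top₁ : ∀ x, ∀ ε > (0:ℝ), ∃ δ > (0:ℝ), ∀ y, ρ x y < δ → ρ' x y < ε)
    (h_top₂ : ∀ x, ∀ ε > (0:ℝ), ∃ δ > (0:ℝ), ∀ y, ρ' x y < δ → ρ x y < ε)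
    -- a set G of homeomorphisms acting transitively by isometries for both metrics
    (G : Set (M → M))
    (hG_homeo : ∀ g ∈ G, Function.Bijective g)
    (hG_trans : ∀ x y : M, ∃ g ∈ G, g x = y)
    (hG_iso : ∀ g ∈ G, ∀ x y, ρ (g x) (g y) = ρ x y)
    (hG_iso' : ∀ g ∈ G, ∀ x y, ρ' (g x) (g y) = ρ' x y)
    -- a common dilation δ of factor λ ∈ (0,1) fixing a point o
    (o : M) (δ : M → M) (hδ_bij : Function.Bijective δ) (hδ_o : δ o = o)
    (lam : ℝ) (hlam : lam ∈ Set.Ioo (0:ℝ) 1)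
    (hδ_ρ : ∀ x y, ρ (δ x) (δ y) = lam * ρ x y)
    (hδ_ρ' : ∀ x y, ρ' (δ x) (δ y) = lam * ρ' x y) :
    ∃ C : ℝ, 1 ≤ C ∧ ∀ x y, (1 / C) * ρ x y ≤ ρ' x y ∧ ρ' x y ≤ C * ρ x y := by
  obtain ⟨hlam0, hlam1⟩ := hlam
  obtain ⟨d₁, hd₁, hball₁⟩ := h_top₁ o 1 one_pos
  obtain ⟨d₂, hd₂, hball₂⟩ := h_top₂ o 1 one_pos
  obtain ⟨C₁, hC₁, hb₁⟩ := aux_two_metric_bound ρ ρ' hρ_self hρ_symm hρ_tri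
    (fun x => (hρ'_self x x).mpr rfl) o δ hδ_bij hδ_o lam hlam0 hlam1 hδ_ρ hδ_ρ'
    G hG_trans hG_iso hG_iso' d₁ hd₁ hball₁
  obtain ⟨C₂, hC₂, hb₂⟩ := aux_two_metric_bound ρ' ρ hρ'_self hρ'_symm hρ'_tri
    (fun x => (hρ_self x x).mpr rfl) o δ hδ_bij hδ_o lam hlam0 hlam1 hδ_ρ' hδ_ρ
    G hG_trans hG_iso' hG_iso d₂ hd₂ hball₂
  refine ⟨max 1 (max C₁ C₂), le_max_left _ _, fun x y => ?_⟩
  have hC : (0:ℝ) < max 1 (max C₁ C₂) := lt_of_lt_of_le one_pos (le_max_left _ _)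
  have hρ'nn : 0 ≤ ρ' x y := by
    have h1 := hρ'_tri x y x
    have h2 := (hρ'_self x x).mpr rfl
    have h3 := hρ'_symm y x
    linarith
  have hρnn : 0 ≤ ρ x y := by
    have h1 := hρ_tri x y x
    have h2 := (hρ_self x x).mpr rfl
    have h3 := hρ_symm y x
    linarith
  constructor
  · rw [div_mul_eq_mul_div, one_mul, div_le_iff₀ hC]
    calc ρ x y ≤ C₂ * ρ' x y := hb₂ x y
      _ ≤ max 1 (max C₁ C₂) * ρ' x y :=
        mul_le_mul_of_nonneg_right (le_trans (le_max_right C₁ C₂) (le_max_right _ _)) hρ'nn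
      _ = ρ' x y * max 1 (max C₁ C₂) := mul_comm _ _
  · calc ρ' x y ≤ C₁ * ρ x y := hb₁ x y
      _ ≤ max 1 (max C₁ C₂) * ρ x y :=
        mul_le_mul_of_nonneg_right (le_trans (le_max_left C₁ C₂) (le_max_right _ _)) hρnn
end

section
/- Let (M,d) be a metric space and ℓ > 0, and let d_{[ℓ]} be the derived semi-intrinsic metric (chains with steps of size at most ℓ). If F : (M,d) → (M',d') is an L-biLipschitz bijection with L ≥ 1, then for all x,y ∈ M: (1/L)·d_{[Lℓ]}(x,y) ≤ d'_{[ℓ]}(F(x),F(y)) ≤ L·d_{[ℓ/L]}(x,y). -/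
/-!
A `C`-Lipschitz map carries a chain with steps at most `ℓ` to a chain with steps at most `Cℓ`
whose length is at most `C` times larger. Applying this to `F` and to its inverse, which is
`L`-Lipschitz by the lower bi-Lipschitz bound, gives the two inequalities.
-/

open scoped ENNReal

/-- The derived semi-intrinsic metric with parameter `ℓ`:
the infimum of total lengths of chains from `p` to `q` whose steps have length at most `ℓ`
(`∞` if no such chain exists). -/
noncomputable def chainDist {M : Type*} [MetricSpace M] (ℓ : ℝ) (p q : M) : ℝ≥0∞ :=
  ⨅ (k : ℕ) (x : Fin (k + 1) → M) (_ : x 0 = p) (_ : x (Fin.last k) = q)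
    (_ : ∀ i : Fin k, dist (x i.castSucc) (x i.succ) ≤ ℓ),
    ∑ i : Fin k, ENNReal.ofReal (dist (x i.castSucc) (x i.succ))

lemma chainDist_le_sum {M : Type*} [MetricSpace M] {ℓ : ℝ} {k : ℕ} (x : Fin (k + 1) → M)
    (hx : ∀ i : Fin k, dist (x i.castSucc) (x i.succ) ≤ ℓ) :
    chainDist ℓ (x 0) (x (Fin.last k)) ≤
      ∑ i : Fin k, ENNReal.ofReal (dist (x i.castSucc) (x i.succ)) :=
  iInf_le_of_le k <| iInf_le_of_le x <| iInf_le_of_le rfl <| iInf_le_of_le rfl <|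
    iInf_le_of_le hx le_rfl

lemma chainDist_map_le {M M' : Type*} [MetricSpace M] [MetricSpace M'] (G : M → M') {C : ℝ}
    (hC : 0 < C) (hG : ∀ a b : M, dist (G a) (G b) ≤ C * dist a b) {ℓ ℓ' : ℝ}
    (hℓ : C * ℓ ≤ ℓ') (x y : M) :
    chainDist ℓ' (G x) (G y) ≤ ENNReal.ofReal C * chainDist ℓ x y := by
  conv_rhs => rw [chainDist]
  simp only [ENNReal.mul_iInf_of_ne (ENNReal.ofReal_pos.2 hC).ne' ENNReal.ofReal_ne_top,
    le_iInf_iff]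
  rintro k c rfl rfl hstep
  calc chainDist ℓ' (G (c 0)) (G (c (Fin.last k)))
      ≤ ∑ i : Fin k, ENNReal.ofReal (dist (G (c i.castSucc)) (G (c i.succ))) :=
        chainDist_le_sum (G ∘ c) fun i =>
          (hG _ _).trans ((mul_le_mul_of_nonneg_left (hstep i) hC.le).trans hℓ)
    _ ≤ ∑ i : Fin k, ENNReal.ofReal C * ENNReal.ofReal (dist (c i.castSucc) (c i.succ)) := by
        gcongr
        rw [← ENNReal.ofReal_mul hC.le]
        exact ENNReal.ofReal_le_ofReal (hG _ _)
    _ = ENNReal.ofReal C * ∑ i : Fin k, ENNReal.ofReal (dist (c i.castSucc) (c i.succ)) :=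
        (Finset.mul_sum _ _ _).symm

/-- For an `L`-biLipschitz bijection `F` with `L ≥ 1`, the derived
semi-intrinsic metrics satisfy
`(1/L) · d_{[Lℓ]}(x,y) ≤ d'_{[ℓ]}(F x, F y) ≤ L · d_{[ℓ/L]}(x,y)`. -/
theorem biLipschitz_chainDist_bounds
    {M M' : Type*} [MetricSpace M] [MetricSpace M']
    (F : M → M') (hF : Function.Bijective F)
    (L : ℝ) (hL : 1 ≤ L)
    (hlow : ∀ x y : M, (1 / L) * dist x y ≤ dist (F x) (F y))
    (hup : ∀ x y : M, dist (F x) (F y) ≤ L * dist x y) :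
    ∀ (x y : M) (ℓ : ℝ), 0 < ℓ →
      (ENNReal.ofReal (1 / L)) * chainDist (L * ℓ) x y ≤ chainDist ℓ (F x) (F y) ∧
      chainDist ℓ (F x) (F y) ≤ ENNReal.ofReal L * chainDist (ℓ / L) x y := by
  intro x y ℓ _
  have hL0 : 0 < L := by linarith
  obtain ⟨g, hgF, hFg⟩ := Function.bijective_iff_has_inverse.mp hF
  have hg : ∀ a b : M', dist (g a) (g b) ≤ L * dist a b := fun a b => by
    have h := hlow (g a) (g b)
    rwa [hFg a, hFg b, one_div_mul_eq_div, div_le_iff₀' hL0] at h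
  refine ⟨?_, chainDist_map_le F hL0 hup (mul_div_cancel₀ ℓ hL0.ne').le x y⟩
  have hback := chainDist_map_le g hL0 hg (ℓ := ℓ) le_rfl (F x) (F y)
  rw [hgF x, hgF y] at hback
  calc ENNReal.ofReal (1 / L) * chainDist (L * ℓ) x y
      ≤ ENNReal.ofReal (1 / L) * (ENNReal.ofReal L * chainDist ℓ (F x) (F y)) := by gcongr
    _ = chainDist ℓ (F x) (F y) := by
        rw [← mul_assoc, ← ENNReal.ofReal_mul (by positivity), one_div_mul_cancel hL0.ne',
          ENNReal.ofReal_one, one_mul]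
end
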